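/- Fix n ∈ ℕ, set σ = (n+1)(n+2), and let m > n. Then the real symmetric matrix (D − σM)(0:m,0:m) has at most n+1 nonpositive eigenvalues: if μ₀, …, μ_m are its eigenvalues listed with multiplicity, then the number of indices i with μᵢ ≤ 0 is at most n+1. -/

import Mathlib

/-- The diagonal stiffness matrix `D` with `D(n,n) = (n+1)(n+2)`. -/
noncomputable def Dmat (i j : ℕ) : ℝ :=
  if i = j then ((i : ℝ) + 1) * ((i : ℝ) + 2) else 0

/-- The symmetric pentadiagonal mass matrix `M` with
`M(n,n) = 2(n+1)(n+2)/((2n+1)(2n+5))` and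
`M(n,n+2) = M(n+2,n) = -√((n+1)(n+2)(n+3)(n+4)/((2n+3)(2n+5)²(2n+7)))`. -/
noncomputable def Mmat (i j : ℕ) : ℝ :=
  if i = j then 2 * ((i : ℝ) + 1) * ((i : ℝ) + 2) / ((2 * (i : ℝ) + 1) * (2 * (i : ℝ) + 5))
  else if i + 2 = j then
    -Real.sqrt (((i : ℝ) + 1) * ((i : ℝ) + 2) * ((i : ℝ) + 3) * ((i : ℝ) + 4) /
      ((2 * (i : ℝ) + 3) * (2 * (i : ℝ) + 5) ^ 2 * (2 * (i : ℝ) + 7)))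
  else if j + 2 = i then
    -Real.sqrt (((j : ℝ) + 1) * ((j : ℝ) + 2) * ((j : ℝ) + 3) * ((j : ℝ) + 4) /
      ((2 * (j : ℝ) + 3) * (2 * (j : ℝ) + 5) ^ 2 * (2 * (j : ℝ) + 7)))
  else 0

/-- The `(m+1) × (m+1)` principal finite section `(D - σM)(0:m,0:m)`. -/
noncomputable def DshiftSec (σ : ℝ) (m : ℕ) : Matrix (Fin (m + 1)) (Fin (m + 1)) ℝ :=
  Matrix.of fun i j => Dmat (i : ℕ) (j : ℕ) - σ * Mmat (i : ℕ) (j : ℕ)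

/-!
On vectors vanishing at the indices `0, …, n`, the quadratic form of `D - σM`, `σ = (n+1)(n+2)`,
is positive definite: the off-diagonal entries of `M` are at most `1/4` in absolute value, so by
the Schur test `xᵀMx ≤ ∑ (M(i,i) + 1/2) xᵢ²`, and `σ (M(i,i) + 1/2) < D(i,i)` for `i > n`.
This subspace of codimension `n + 1` meets the span of the eigenvectors with nonpositive
eigenvalues only in `0`, so there are at most `n + 1` such eigenvalues.
-/

open Matrix Module RCLike
open scoped InnerProductSpace

section Orthonormal

variable {𝕜 E ι : Type*} [RCLike 𝕜] [NormedAddCommGroup E] [InnerProductSpace 𝕜 E]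
  {T : E →ₗ[𝕜] E} {u : ι → E} {μ : ι → ℝ}

theorem Orthonormal.re_inner_apply_nonpos_of_mem_span [Fintype ι] (hu : Orthonormal 𝕜 u)
    (hTu : ∀ i, T (u i) = (μ i : 𝕜) • u i) (hμ : ∀ i, μ i ≤ 0) {x : E}
    (hx : x ∈ Submodule.span 𝕜 (Set.range u)) : re ⟪x, T x⟫_𝕜 ≤ 0 := by
  obtain ⟨c, rfl⟩ := (Submodule.mem_span_range_iff_exists_fun 𝕜).mp hx
  have hTx : T (∑ i, c i • u i) = ∑ i, (c i * μ i : 𝕜) • u i := by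
    simp only [map_sum, map_smul, hTu, smul_smul]
  rw [hTx, hu.inner_sum, map_sum]
  refine Finset.sum_nonpos fun i _ => ?_
  rw [← mul_assoc, RCLike.conj_mul, ← ofReal_pow, ← ofReal_mul, ofReal_re]
  exact mul_nonpos_of_nonneg_of_nonpos (sq_nonneg _) (hμ i)

theorem Orthonormal.card_nonpos_add_finrank_le [FiniteDimensional 𝕜 E] [Fintype ι]
    (hu : Orthonormal 𝕜 u) (hTu : ∀ i, T (u i) = (μ i : 𝕜) • u i) {W : Submodule 𝕜 E}
    (hW : ∀ x ∈ W, x ≠ 0 → 0 < re ⟪x, T x⟫_𝕜) :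
    Fintype.card {i // μ i ≤ 0} + finrank 𝕜 W ≤ finrank 𝕜 E := by
  set V := Submodule.span 𝕜 (Set.range fun i : {i // μ i ≤ 0} => u i)
  have huV : Orthonormal 𝕜 fun i : {i // μ i ≤ 0} => u i := hu.comp _ Subtype.val_injective
  have hdisj : V ⊓ W = ⊥ := by
    refine (Submodule.eq_bot_iff _).mpr fun x ⟨hxV, hxW⟩ => ?_
    by_contra hx
    exact (hW x hxW hx).not_ge
      (huV.re_inner_apply_nonpos_of_mem_span (fun i => hTu i) (fun i => i.2) hxV)
  have := Submodule.finrank_sup_add_finrank_inf_eq V W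
  rw [hdisj, finrank_bot, add_zero, finrank_span_eq_card huV.linearIndependent] at this
  exact this ▸ Submodule.finrank_le _

end Orthonormal

theorem Matrix.IsHermitian.card_nonpos_eigenvalues_le {𝕜 ι : Type*} [RCLike 𝕜] [Fintype ι]
    [DecidableEq ι] {A : Matrix ι ι 𝕜} (hA : A.IsHermitian) (s : Finset ι)
    (hpos : ∀ x : ι → 𝕜, x ≠ 0 → (∀ i ∈ s, x i = 0) → 0 < re (star x ⬝ᵥ A *ᵥ x)) :
    (Finset.univ.filter fun i => hA.eigenvalues i ≤ 0).card ≤ s.card := by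
  let restrict : EuclideanSpace 𝕜 ι →ₗ[𝕜] (s → 𝕜) :=
    LinearMap.pi fun i => EuclideanSpace.projₗ (i : ι)
  have hTu : ∀ i, toEuclideanLin A (hA.eigenvectorBasis i) =
      (hA.eigenvalues i : 𝕜) • hA.eigenvectorBasis i := fun i => by
    apply WithLp.ofLp_injective
    rw [ofLp_toLpLin, toLin'_apply, hA.mulVec_eigenvectorBasis, WithLp.ofLp_smul,
      RCLike.real_smul_eq_coe_smul (K := 𝕜)]
  have hW : ∀ x ∈ LinearMap.ker restrict, x ≠ 0 →
      0 < re ⟪x, toEuclideanLin A x⟫_𝕜 := fun x hx hx0 => by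
    rw [EuclideanSpace.inner_eq_star_dotProduct, ofLp_toLpLin, dotProduct_comm]
    refine hpos _ (by simpa using hx0) fun i hi => congrFun (LinearMap.mem_ker.mp hx) ⟨i, hi⟩
  have hcount := hA.eigenvectorBasis.orthonormal.card_nonpos_add_finrank_le hTu hW
  have hrank := restrict.finrank_range_add_finrank_ker
  have hrange := (LinearMap.range restrict).finrank_le
  rw [Fintype.card_subtype, finrank_euclideanSpace] at hcount
  rw [finrank_euclideanSpace] at hrank
  rw [Module.finrank_fintype_fun_eq_card, Fintype.card_coe] at hrange
  omega

theorem Matrix.IsSymm.dotProduct_mulVec_self_le {ι : Type*} [Fintype ι] {B : Matrix ι ι ℝ}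
    (hB : B.IsSymm) (x : ι → ℝ) : x ⬝ᵥ B *ᵥ x ≤ ∑ i, (∑ j, |B i j|) * x i ^ 2 := by
  have hswap : ∑ i, ∑ j, |B i j| * x j ^ 2 = ∑ i, ∑ j, |B i j| * x i ^ 2 := by
    rw [Finset.sum_comm]
    simp_rw [hB.apply]
  calc x ⬝ᵥ B *ᵥ x = ∑ i, ∑ j, x i * B i j * x j := by
        simp only [dotProduct, mulVec, Finset.mul_sum, mul_assoc]
    _ ≤ ∑ i, ∑ j, (|B i j| * x i ^ 2 + |B i j| * x j ^ 2) / 2 := by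
        gcongr with i _ j _
        calc x i * B i j * x j ≤ |x i * B i j * x j| := le_abs_self _
          _ = |B i j| * (|x i| * |x j|) := by rw [abs_mul, abs_mul]; ring
          _ ≤ |B i j| * ((x i ^ 2 + x j ^ 2) / 2) := by
              gcongr
              nlinarith [two_mul_le_add_sq |x i| |x j|, sq_abs (x i), sq_abs (x j)]
          _ = _ := by ring
    _ = ∑ i, (∑ j, |B i j|) * x i ^ 2 := by
        simp only [add_div, Finset.sum_add_distrib, ← Finset.sum_div, hswap, Finset.sum_mul]
        ring

lemma Mmat_symm (i j : ℕ) : Mmat i j = Mmat j i := by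
  unfold Mmat
  split_ifs <;> first | rfl | (subst_vars; rfl) | omega

lemma Mmat_self_nonneg (i : ℕ) : 0 ≤ Mmat i i := by
  rw [Mmat, if_pos rfl]
  positivity

lemma abs_Mmat_add_two_le (i : ℕ) : |Mmat i (i + 2)| ≤ 1 / 4 := by
  have hx : (0 : ℝ) ≤ i := i.cast_nonneg
  rw [Mmat, if_neg (by omega), if_pos rfl, abs_neg, abs_of_nonneg (Real.sqrt_nonneg _),
    Real.sqrt_le_left (by norm_num), div_le_iff₀ (by positivity)]
  nlinarith [mul_nonneg hx hx, mul_nonneg (mul_nonneg hx hx) hx]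

lemma Mmat_eq_zero_of_ne {i j : ℕ} (h : j ≠ i) (h₁ : j ≠ i + 2) (h₂ : i ≠ j + 2) :
    Mmat i j = 0 := by
  rw [Mmat, if_neg (Ne.symm h), if_neg (Ne.symm h₁), if_neg (Ne.symm h₂)]

/-- For `i < 2` the last summand is spurious (`i - 2` truncates to `0`), which only weakens the
bound. -/
lemma abs_Mmat_le (i j : ℕ) :
    |Mmat i j| ≤ (if j = i then Mmat i i else 0) + (if j = i + 2 then 1 / 4 else 0)
      + (if j = i - 2 then 1 / 4 else 0) := by
  have hquarter (p : Prop) [Decidable p] : (0 : ℝ) ≤ if p then 1 / 4 else 0 := by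
    split_ifs <;> norm_num
  have h₁ := hquarter (j = i + 2)
  have h₂ := hquarter (j = i - 2)
  rcases eq_or_ne j i with rfl | hji
  · rw [if_pos rfl, abs_of_nonneg (Mmat_self_nonneg j)]
    linarith
  rcases eq_or_ne j (i + 2) with rfl | hj₁
  · rw [if_neg hji, if_pos rfl]
    linarith [abs_Mmat_add_two_le i]
  rcases eq_or_ne i (j + 2) with rfl | hj₂
  · rw [if_neg hji, if_neg hj₁, if_pos (by omega), Mmat_symm]
    linarith [abs_Mmat_add_two_le j]
  · rw [Mmat_eq_zero_of_ne hji hj₁ hj₂, abs_zero, if_neg hji]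
    linarith

lemma sum_abs_Mmat_le (i N : ℕ) : ∑ j ∈ Finset.range N, |Mmat i j| ≤ Mmat i i + 1 / 2 := by
  calc ∑ j ∈ Finset.range N, |Mmat i j|
      ≤ ∑ j ∈ Finset.range N, ((if j = i then Mmat i i else 0) + (if j = i + 2 then 1 / 4 else 0)
        + (if j = i - 2 then 1 / 4 else 0)) := Finset.sum_le_sum fun j _ => abs_Mmat_le i j
    _ ≤ Mmat i i + 1 / 4 + 1 / 4 := by
      simp only [Finset.sum_add_distrib, Finset.sum_ite_eq']
      gcongr <;> split_ifs <;> linarith [Mmat_self_nonneg i]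
    _ = Mmat i i + 1 / 2 := by ring

lemma shift_mul_Mmat_add_half_lt_Dmat {n i : ℕ} (h : n < i) :
    ((n : ℝ) + 1) * ((n : ℝ) + 2) * (Mmat i i + 1 / 2) < Dmat i i := by
  have hni : (n : ℝ) + 1 ≤ i := by exact_mod_cast h
  have hq : (0 : ℝ) < (2 * i + 1) * (2 * i + 5) := by positivity
  rw [Mmat, Dmat, if_pos rfl, if_pos rfl, div_add' _ _ _ hq.ne', mul_div_assoc', div_lt_iff₀ hq]
  have hσ : ((n : ℝ) + 1) * ((n : ℝ) + 2) ≤ i * (i + 1) := by nlinarith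
  have hi : (0 : ℝ) ≤ i := i.cast_nonneg
  nlinarith [mul_le_mul_of_nonneg_right hσ
    (by positivity : (0 : ℝ) ≤ 2 * (i + 1) * (i + 2) + 1 / 2 * ((2 * i + 1) * (2 * i + 5)))]

noncomputable def Msec (m : ℕ) : Matrix (Fin (m + 1)) (Fin (m + 1)) ℝ :=
  Matrix.of fun i j => Mmat i j

lemma Msec_isSymm (m : ℕ) : (Msec m).IsSymm :=
  Matrix.IsSymm.ext fun i j => Mmat_symm j i

lemma DshiftSec_eq_diagonal_sub (σ : ℝ) (m : ℕ) :
    DshiftSec σ m = diagonal (fun i : Fin (m + 1) => Dmat i i) - σ • Msec m := by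
  ext i j
  rcases eq_or_ne i j with rfl | h
  · simp [DshiftSec, Msec]
  · simp [DshiftSec, Msec, Dmat, h, Fin.val_injective.ne h]

lemma DshiftSec_dotProduct_mulVec_pos (n m : ℕ) {x : Fin (m + 1) → ℝ} (hx : x ≠ 0)
    (hx₀ : ∀ i : Fin (m + 1), (i : ℕ) < n + 1 → x i = 0) :
    0 < x ⬝ᵥ DshiftSec (((n : ℝ) + 1) * ((n : ℝ) + 2)) m *ᵥ x := by
  set σ := ((n : ℝ) + 1) * ((n : ℝ) + 2)
  have hcoef (i : Fin (m + 1)) (hi : x i ≠ 0) : 0 < Dmat i i - σ * (Mmat i i + 1 / 2) :=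
    sub_pos.mpr (shift_mul_Mmat_add_half_lt_Dmat (not_lt.mp (mt (hx₀ i) hi)))
  have hrow (i : Fin (m + 1)) : ∑ j, |Msec m i j| ≤ Mmat i i + 1 / 2 := by
    simpa [Msec, Fin.sum_univ_eq_sum_range (fun j => |Mmat i j|)] using sum_abs_Mmat_le i (m + 1)
  obtain ⟨k, hk⟩ : ∃ k, x k ≠ 0 := Function.ne_iff.mp hx
  calc 0 < ∑ i : Fin (m + 1), (Dmat i i - σ * (Mmat i i + 1 / 2)) * x i ^ 2 := by
        refine Finset.sum_pos' (fun i _ => ?_)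
          ⟨k, Finset.mem_univ _, mul_pos (hcoef k hk) (by positivity)⟩
        by_cases hi : x i = 0
        · simp [hi]
        · exact (mul_pos (hcoef i hi) (by positivity)).le
    _ ≤ ∑ i : Fin (m + 1), Dmat i i * x i ^ 2 - σ * ∑ i, (∑ j, |Msec m i j|) * x i ^ 2 := by
        rw [Finset.mul_sum, ← Finset.sum_sub_distrib]
        gcongr with i
        have hσ : 0 ≤ σ := by positivity
        nlinarith [mul_le_mul_of_nonneg_left
          (mul_le_mul_of_nonneg_right (hrow i) (sq_nonneg (x i))) hσ]
    _ ≤ ∑ i : Fin (m + 1), Dmat i i * x i ^ 2 - σ * (x ⬝ᵥ Msec m *ᵥ x) := by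
        gcongr
        exact (Msec_isSymm m).dotProduct_mulVec_self_le x
    _ = x ⬝ᵥ DshiftSec σ m *ᵥ x := by
        rw [DshiftSec_eq_diagonal_sub, sub_mulVec, dotProduct_sub, smul_mulVec, dotProduct_smul,
          smul_eq_mul]
        congr 1
        simp only [dotProduct, mulVec_diagonal]
        exact Finset.sum_congr rfl fun i _ => by ring

theorem shifted_section_nonpositive_eigenvalue_count_general
    (n m : ℕ)
    (hA : (DshiftSec (((n : ℝ) + 1) * ((n : ℝ) + 2)) m).IsHermitian) :
    (Finset.univ.filter fun i : Fin (m + 1) => hA.eigenvalues i ≤ 0).card ≤ n + 1 := by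
  calc _ ≤ (Finset.univ.filter fun i : Fin (m + 1) => (i : ℕ) < n + 1).card :=
        hA.card_nonpos_eigenvalues_le _ fun x hx hx₀ => by
          simpa using DshiftSec_dotProduct_mulVec_pos n m hx fun i hi => hx₀ i (by simpa using hi)
    _ = min (m + 1) (n + 1) := Fin.card_filter_val_lt
    _ ≤ n + 1 := min_le_right _ _

theorem shifted_section_nonpositive_eigenvalue_count
    (n m : ℕ) (hm : n < m)
    (hA : (DshiftSec (((n : ℝ) + 1) * ((n : ℝ) + 2)) m).IsHermitian) :
    (Finset.univ.filter fun i : Fin (m + 1) => hA.eigenvalues i ≤ 0).card ≤ n + 1 :=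
  shifted_section_nonpositive_eigenvalue_count_general n m hA
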